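/- arXiv:1603.03156 — 2 statements merged into one kernel-verified Lean document; each statement's English description precedes it below -/
import Mathlib

section
/- Let G = A × B be a finite group with A non-abelian. If G is a GC*-group, then B = B', i.e., B is a perfect group. -/
noncomputable section

/-- `χ : G → ℂ` is the character of some irreducible complex representation of `G`. -/
def IsIrrChar {G : Type*} [Group G] (χ : G → ℂ) : Prop :=
  ∃ (n : ℕ) (ρ : Representation ℂ G (Fin n → ℂ)),
    0 < n ∧
    (∀ U : Submodule ℂ (Fin n → ℂ), (∀ g : G, U.map (ρ g) ≤ U) → U = ⊥ ∨ U = ⊤) ∧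
    (∀ g : G, χ g = LinearMap.trace ℂ (Fin n → ℂ) (ρ g))

/-- Two complex characters are Galois conjugate: some field automorphism (which, on the
cyclotomic field generated by the character values, restricts to a Galois automorphism
over `ℚ`) carries the values of `χ` to those of `ψ`. -/
def GaloisConj {G : Type*} [Group G] (χ ψ : G → ℂ) : Prop :=
  ∃ σ : ℂ ≃+* ℂ, ∀ g : G, ψ g = σ (χ g)

/-- `G` is a `GC*`-group: any two non-linear irreducible complex characters of the same
degree are Galois conjugate. -/
def IsGCStar (G : Type*) [Group G] : Prop :=
  ∀ χ ψ : G → ℂ, IsIrrChar χ → IsIrrChar ψ → χ 1 ≠ 1 → ψ 1 ≠ 1 →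
    χ 1 = ψ 1 → GaloisConj χ ψ

/-! If `B` is not perfect it has a nontrivial linear character `λ`, and since `A` is non-abelian
it has an irreducible representation `ρ` of degree `n ≥ 2` (by Wedderburn, otherwise `ℂ[A]` would
be a product of copies of `ℂ`, hence commutative). The characters of `ρ ⊗ 1` and `ρ ⊗ λ` are then
irreducible characters of `A × B` of degree `n`, but no field automorphism carries the first to
the second: at `(1, b)` with `λ b ≠ 1` it would have to send `n` to `λ(b) n ≠ n`. -/

theorem Submodule.eq_bot_or_eq_top_of_forall_end_mapsTo {K V : Type*} [DivisionRing K]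
    [AddCommGroup V] [Module K V] (U : Submodule K V)
    (hU : ∀ f : Module.End K V, ∀ v ∈ U, f v ∈ U) : U = ⊥ ∨ U = ⊤ := by
  cases subsingleton_or_nontrivial V
  · exact Or.inl (Subsingleton.elim _ _)
  let W : Submodule (Module.End K V) V :=
    { carrier := U, add_mem' := U.add_mem, zero_mem' := U.zero_mem, smul_mem' := hU }
  rcases IsSimpleOrder.eq_bot_or_eq_top W with hW | hW
  · exact Or.inl (SetLike.coe_injective (congrArg SetLike.coe hW :))
  · exact Or.inr (SetLike.coe_injective (congrArg SetLike.coe hW :))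

namespace Representation

variable {k G H V : Type*} [Field k] [Monoid G] [Monoid H] [AddCommGroup V] [Module k V]

/-- Irreducibility as used in `IsIrrChar`; unlike `Representation.IsIrreducible`, it also holds
for `V = 0`. -/
def HasTrivialInvariantSubspaces (ρ : Representation k G V) : Prop :=
  ∀ U : Submodule k V, (∀ g : G, U.map (ρ g) ≤ U) → U = ⊥ ∨ U = ⊤

theorem HasTrivialInvariantSubspaces.comp {ρ : Representation k G V}
    (hρ : HasTrivialInvariantSubspaces ρ) {f : H →* G} (hf : Function.Surjective f) :
    HasTrivialInvariantSubspaces (ρ.comp f) := fun U hU ↦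
  hρ U fun g ↦ by obtain ⟨h, rfl⟩ := hf g; exact hU h

def twist (ρ : Representation k G V) (χ : G →* kˣ) : Representation k G V where
  toFun g := (χ g : k) • ρ g
  map_one' := by simp
  map_mul' g h := by simp only [map_mul, Units.val_mul, smul_mul_smul_comm]

@[simp]
theorem twist_apply (ρ : Representation k G V) (χ : G →* kˣ) (g : G) :
    ρ.twist χ g = (χ g : k) • ρ g := rfl

theorem HasTrivialInvariantSubspaces.twist {ρ : Representation k G V}
    (hρ : HasTrivialInvariantSubspaces ρ) (χ : G →* kˣ) :
    HasTrivialInvariantSubspaces (ρ.twist χ) := fun U hU ↦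
  hρ U fun g ↦ by simpa [Submodule.map_smul _ _ _ (χ g).ne_zero] using hU g

open MonoidAlgebra in
theorem hasTrivialInvariantSubspaces_of_surjective (ψ : MonoidAlgebra k G →ₐ[k] Module.End k V)
    (hψ : Function.Surjective ψ) :
    HasTrivialInvariantSubspaces ((ψ : MonoidAlgebra k G →* Module.End k V).comp (of k G)) := by
  intro U hU
  refine U.eq_bot_or_eq_top_of_forall_end_mapsTo fun f ↦ ?_
  obtain ⟨x, rfl⟩ := hψ f
  induction x using MonoidAlgebra.induction_on with
  | of g => exact fun v hv ↦ hU g (Submodule.mem_map_of_mem hv)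
  | add x y hx hy => exact fun v hv ↦ by simpa using U.add_mem (hx v hv) (hy v hv)
  | smul c x hx => exact fun v hv ↦ by simpa using U.smul_mem c (hx v hv)

end Representation

theorem Representation.exists_two_le_hasTrivialInvariantSubspaces (k : Type*) {G : Type*}
    [Field k] [IsAlgClosed k] [Group G] [Finite G] [NeZero (Nat.card G : k)]
    (hG : ¬ ∀ a b : G, a * b = b * a) :
    ∃ (d : ℕ) (ρ : Representation k G (Fin d → k)), 2 ≤ d ∧ HasTrivialInvariantSubspaces ρ := by
  obtain ⟨n, d, -, ⟨φ⟩⟩ :=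
    IsSemisimpleRing.exists_algEquiv_pi_matrix_of_isAlgClosed k (MonoidAlgebra k G)
  by_cases hd : ∃ i, 2 ≤ d i
  · obtain ⟨i, hi⟩ := hd
    let ψ : MonoidAlgebra k G →ₐ[k] Module.End k (Fin (d i) → k) :=
      Matrix.toLinAlgEquiv'.toAlgHom.comp ((Pi.evalAlgHom k _ i).comp φ.toAlgHom)
    refine ⟨d i, _, hi, hasTrivialInvariantSubspaces_of_surjective ψ ?_⟩
    exact Matrix.toLinAlgEquiv'.surjective.comp ((Function.surjective_eval i).comp φ.surjective)
  · push Not at hd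
    have hcomm : ∀ x y : Π i, Matrix (Fin (d i)) (Fin (d i)) k, x * y = y * x := by
      intro x y
      funext i
      have : Subsingleton (Fin (d i)) := Fin.subsingleton_iff_le_one.mpr (by grind)
      ext j l
      simp only [Pi.mul_apply, Matrix.mul_apply]
      refine Fintype.sum_congr _ _ fun t ↦ ?_
      rw [Subsingleton.elim t l, Subsingleton.elim j l, mul_comm]
    refine (hG fun a b ↦ MonoidAlgebra.of_injective (R := k) (φ.injective ?_)).elim
    simp only [map_mul, hcomm]

theorem exists_monoidHom_units_apply_ne_one {G : Type*} [Group G] [Finite G] (M : Type*)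
    [CommMonoid M] [HasEnoughRootsOfUnity M (Monoid.exponent (Abelianization G))]
    (hG : commutator G ≠ ⊤) : ∃ (χ : G →* Mˣ) (g : G), χ g ≠ 1 := by
  obtain ⟨g, hg⟩ : ∃ g : G, g ∉ commutator G := by
    simpa [Subgroup.eq_top_iff'] using hG
  have hg' : Abelianization.of g ≠ 1 := fun h ↦ hg ((QuotientGroup.eq_one_iff g).mp h)
  obtain ⟨φ, hφ⟩ :=
    CommGroup.exists_apply_ne_one_of_hasEnoughRootsOfUnity (Abelianization G) M hg'
  exact ⟨φ.comp Abelianization.of, g, hφ⟩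

/-- If `G = A × B` with `A` non-abelian is a `GC*`-group, then `B` is perfect. -/
theorem gcstar_direct_factor_perfect {A B : Type*} [Group A] [Group B]
    [Finite A] [Finite B] (hA : ¬ ∀ a b : A, a * b = b * a)
    (h : IsGCStar (A × B)) : commutator B = ⊤ := by
  by_contra hB
  have : NeZero (Monoid.exponent (Abelianization B) : ℂ) :=
    ⟨Nat.cast_ne_zero.mpr Monoid.exponent_ne_zero_of_finite⟩
  obtain ⟨χ, b, hb⟩ := exists_monoidHom_units_apply_ne_one ℂ hB
  obtain ⟨n, ρ, hn, hρ⟩ := Representation.exists_two_le_hasTrivialInvariantSubspaces ℂ hA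
  let ρ₁ : Representation ℂ (A × B) (Fin n → ℂ) := ρ.comp (MonoidHom.fst A B)
  have hρ₁ : ρ₁.HasTrivialInvariantSubspaces := hρ.comp Prod.fst_surjective
  let ρ₂ := ρ₁.twist (χ.comp (MonoidHom.snd A B))
  have htrace (g : A × B) :
      LinearMap.trace ℂ _ (ρ₂ g) = χ g.2 * LinearMap.trace ℂ _ (ρ₁ g) := by
    simp [ρ₂]
  have hdeg : LinearMap.trace ℂ _ (ρ₁ 1) = n := by simp [ρ₁]
  have hdeg_ne : (n : ℂ) ≠ 1 := by exact_mod_cast (by omega : n ≠ 1)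
  obtain ⟨σ, hσ⟩ := h (fun g ↦ LinearMap.trace ℂ _ (ρ₁ g)) (fun g ↦ LinearMap.trace ℂ _ (ρ₂ g))
    ⟨n, ρ₁, by omega, hρ₁, fun _ ↦ rfl⟩ ⟨n, ρ₂, by omega, hρ₁.twist _, fun _ ↦ rfl⟩
    (by rwa [hdeg]) (by simpa [htrace, hdeg] using hdeg_ne) (by simp)
  have hval : (χ b : ℂ) * n = n := by simpa [htrace, ρ₁] using hσ (1, b)
  have hn0 : (n : ℂ) ≠ 0 := by exact_mod_cast (by omega : n ≠ 0)
  exact hb (Units.val_eq_one.mp ((mul_eq_right₀ hn0).mp hval))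
end
end

section
/- Let G be a finite group and N a normal subgroup of G. If G is a GC*-group, then the quotient group G/N is a GC*-group. -/
noncomputable section

/-- Quotients of `GC*`-groups are `GC*`-groups. -/
theorem gcstar_quotient {G : Type*} [Group G] [Finite G] (N : Subgroup G) [N.Normal]
    (h : IsGCStar G) : IsGCStar (G ⧸ N) := by
  have lift : ∀ χ : G ⧸ N → ℂ, IsIrrChar χ → IsIrrChar (χ ∘ QuotientGroup.mk) := by
    rintro χ ⟨n, ρ, hn, hirr, htr⟩
    refine ⟨n, ρ.comp (QuotientGroup.mk' N), hn, ?_, ?_⟩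
    · intro U hU
      apply hirr
      intro q
      obtain ⟨g, rfl⟩ := QuotientGroup.mk_surjective q
      exact hU g
    · intro g
      exact htr (QuotientGroup.mk g)
  intro χ ψ hχ hψ hχ1 hψ1 hdeg
  obtain ⟨σ, hσ⟩ := h (χ ∘ QuotientGroup.mk) (ψ ∘ QuotientGroup.mk)
    (lift χ hχ) (lift ψ hψ) hχ1 hψ1 hdeg
  refine ⟨σ, fun q => ?_⟩
  obtain ⟨g, rfl⟩ := QuotientGroup.mk_surjective q
  exact hσ g
end
end
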